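/- arXiv:cs/0610057 — 2 statements merged into one kernel-verified Lean document; each statement's English description precedes it below -/
import Mathlib

section
/- There exists a constant C₂ > 0, depending only on the prime power q, such that for all integers m ≥ n ≥ 1, every real μ > 0, every integer N ≥ 2 with N ≥ q^{m+n}·μ, and every integer i with (m+n)/2 − √((m−n)²/4 + log_q N − (m+n) − log_q μ) ≤ i ≤ n, the quantity p_i = (1 − B_{i−1}/q^{mn})^N − (1 − B_i/q^{mn})^N satisfies p_i ≤ e^{−C₂·μ}. -/
/-!
Since `1 - B_i/q^{mn} ≥ 0`, `p_i ≤ (1 - B_{i-1}/q^{mn})^N ≤ exp(-N B_{i-1}/q^{mn})`. The matrices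
`[A B; CA CB]` with `A ∈ GL_t` are pairwise distinct of rank at most `t`, so
`B_t ≥ |GL_t(F_q)| q^{t(m+n-2t)} ≥ q^{t(m+n-t)}/4`, using `∏_{k ≥ 1} (1 - q^{-k}) ≥ 1/4`.
The lower bound on `i` is a quadratic inequality in `i` which gives
`(i-1)(m+n-i+1) ≥ mn + 1 + log_q μ - log_q N`, hence `N B_{i-1}/q^{mn} ≥ qμ/4 ≥ μ/2`, and `C₂ = 1/2`.
-/

/-- Number of `m × n` matrices over `F` of rank at most `t`. -/
noncomputable def ballCount (F : Type*) [Field F] [Fintype F] (m n t : ℕ) : ℕ :=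
  Nat.card {A : Matrix (Fin m) (Fin n) F // A.rank ≤ t}

open Matrix Real

lemma quarter_add_le_prod_one_sub_pow {r : ℝ} (hr0 : 0 ≤ r) (hr : r ≤ 1 / 2) (t : ℕ) :
    1 / 4 + r ^ t / 2 ≤ ∏ k ∈ Finset.range t, (1 - r ^ (k + 1)) := by
  -- the term `r ^ t / 2` strengthens the claim just enough for the induction to close
  induction t with
  | zero => norm_num
  | succ u ih =>
    rw [Finset.prod_range_succ]
    rcases Nat.eq_zero_or_pos u with rfl | hu
    · norm_num; linarith
    · have hru : r ^ u ≤ r := pow_le_of_le_one hr0 (by linarith) hu.ne'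
      have hpos : 0 ≤ 1 - r ^ (u + 1) := by
        rw [pow_succ]; nlinarith [pow_nonneg hr0 u]
      nlinarith [mul_le_mul_of_nonneg_right ih hpos, pow_nonneg hr0 u, pow_succ r u,
        mul_nonneg (pow_nonneg hr0 u) hr0]

lemma logb_pow_mul_self {b x : ℝ} (hb : 1 < b) (hx : 0 < x) (k : ℕ) :
    logb b (b ^ k * x) = k + logb b x := by
  rw [logb_mul (by positivity) hx.ne', logb_pow, logb_self_eq_one hb, mul_one]

lemma mul_sub_le_of_sub_sqrt_le {m n t a b : ℝ} (hnm : n ≤ m) (htn : t + 1 ≤ n) (ht : 0 ≤ t)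
    (hab : m + n + b ≤ a) (h : (m + n) / 2 - √((m - n) ^ 2 / 4 + a - (m + n) - b) ≤ t + 1) :
    m * n + 1 + b - a ≤ t * (m + n - t) := by
  have hsq : ((m + n) / 2 - (t + 1)) ^ 2 ≤ (m - n) ^ 2 / 4 + a - (m + n) - b :=
    (le_sqrt (by linarith) (by nlinarith [sq_nonneg (m - n)])).1 (by linarith)
  nlinarith

lemma one_sub_pow_sub_one_sub_pow_le {x y : ℝ} (hx : x ≤ 1) (hy : y ≤ 1) (N : ℕ) :
    (1 - x) ^ N - (1 - y) ^ N ≤ exp (-(N * x)) := by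
  have hxN : (1 - x) ^ N ≤ exp (-(N * x)) := by
    rw [← mul_neg, exp_nat_mul]
    exact pow_le_pow_left₀ (by linarith) (by linarith [add_one_le_exp (-x)]) N
  linarith [pow_nonneg (sub_nonneg.2 hy) N]

lemma rank_fromBlocks_mul_le {R l m n : Type*} [CommRing R] [StrongRankCondition R] [Fintype l]
    [DecidableEq l] [Fintype m] [Fintype n] (A : Matrix l l R) (B : Matrix l n R)
    (C : Matrix m l R) :
    (fromBlocks A B (C * A) (C * B)).rank ≤ Fintype.card l := by
  have : fromBlocks A B (C * A) (C * B) = fromRows 1 C * fromCols A B := by simp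
  rw [this]
  exact (rank_mul_le_right _ _).trans (rank_le_card_height _)

section Counting

variable {F : Type*} [Field F] [Fintype F]

lemma card_GL_prod_le_card_rank_le {l m n : Type*} [Fintype l] [DecidableEq l] [Fintype m]
    [Fintype n] :
    Nat.card (GL l F × Matrix l n F × Matrix m l F) ≤
      Nat.card {M : Matrix (l ⊕ m) (l ⊕ n) F // M.rank ≤ Fintype.card l} := by
  refine Nat.card_le_card_of_injective (fun x ↦ ⟨fromBlocks (x.1 : Matrix l l F) x.2.1
    (x.2.2 * (x.1 : Matrix l l F)) (x.2.2 * x.2.1), rank_fromBlocks_mul_le _ _ _⟩) ?_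
  rintro ⟨A, B, C⟩ ⟨A', B', C'⟩ h
  obtain ⟨hA, hB, hC, -⟩ := fromBlocks_inj.1 (Subtype.ext_iff.1 h)
  obtain rfl : A = A' := Units.ext hA
  have hC' : C = C' := by
    simpa [Matrix.mul_assoc] using congrArg (· * ((A⁻¹ : GL l F) : Matrix l l F)) hC
  exact Prod.ext rfl (Prod.ext hB hC')

omit [Field F] in
lemma card_matrix_fin (a b : ℕ) :
    Nat.card (Matrix (Fin a) (Fin b) F) = Fintype.card F ^ (a * b) := by
  simp [Nat.card_eq_fintype_card, Matrix, pow_mul, pow_right_comm]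

lemma ballCount_le (m n t : ℕ) : ballCount F m n t ≤ Fintype.card F ^ (m * n) :=
  card_matrix_fin (F := F) m n ▸ Nat.card_le_card_of_injective _ Subtype.val_injective

lemma card_GL_mul_pow_le_ballCount {m n t : ℕ} (htm : t ≤ m) (htn : t ≤ n) :
    Nat.card (GL (Fin t) F) * Fintype.card F ^ (t * (n - t) + (m - t) * t) ≤
      ballCount F m n t := by
  let em : Fin m ≃ Fin t ⊕ Fin (m - t) := (finCongr (by omega)).trans finSumFinEquiv.symm
  let en : Fin n ≃ Fin t ⊕ Fin (n - t) := (finCongr (by omega)).trans finSumFinEquiv.symm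
  have hreindex : ballCount F m n t =
      Nat.card {M : Matrix (Fin t ⊕ Fin (m - t)) (Fin t ⊕ Fin (n - t)) F // M.rank ≤ t} :=
    Nat.card_congr ((reindex em en).subtypeEquiv fun M ↦ by rw [rank_reindex])
  have := card_GL_prod_le_card_rank_le (F := F) (l := Fin t) (m := Fin (m - t)) (n := Fin (n - t))
  rw [Nat.card_prod, Nat.card_prod, card_matrix_fin, card_matrix_fin, Fintype.card_fin] at this
  rw [hreindex, pow_add]
  exact this

lemma pow_div_four_le_card_GL (t : ℕ) :
    (Fintype.card F : ℝ) ^ (t * t) / 4 ≤ Nat.card (GL (Fin t) F) := by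
  set q := Fintype.card F
  have hq : (2 : ℝ) ≤ q := by exact_mod_cast Fintype.one_lt_card (α := F)
  have hfactor : ∀ k ∈ Finset.range t,
      (q : ℝ) ^ t - (q : ℝ) ^ (t - 1 - k) = (q : ℝ) ^ t * (1 - (q : ℝ)⁻¹ ^ (k + 1)) := by
    intro k hk
    have hpow : (q : ℝ) ^ t = (q : ℝ) ^ (t - 1 - k) * (q : ℝ) ^ (k + 1) := by
      rw [← pow_add]; congr 1; have := Finset.mem_range.1 hk; omega
    rw [mul_sub, mul_one, inv_pow]
    congr 1
    rw [hpow, mul_inv_cancel_right₀ (by positivity)]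
  have hGL : (Nat.card (GL (Fin t) F) : ℝ) =
      (q : ℝ) ^ (t * t) * ∏ k ∈ Finset.range t, (1 - (q : ℝ)⁻¹ ^ (k + 1)) := by
    rw [card_GL_field, Nat.cast_prod,
      Fin.prod_univ_eq_prod_range (fun j ↦ ((q ^ t - q ^ j : ℕ) : ℝ)),
      Finset.prod_congr rfl (g := fun j ↦ (q : ℝ) ^ t - (q : ℝ) ^ j) fun j hj ↦ by
        rw [Nat.cast_sub (Nat.pow_le_pow_right Fintype.card_pos (Finset.mem_range.1 hj).le)]
        push_cast; rfl,
      ← Finset.prod_range_reflect, Finset.prod_congr rfl hfactor, Finset.prod_mul_distrib,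
      Finset.prod_const, Finset.card_range, ← pow_mul]
  have := quarter_add_le_prod_one_sub_pow (r := (q : ℝ)⁻¹) (by positivity)
    (by rw [inv_le_comm₀ (by positivity) (by norm_num)]; linarith) t
  rw [hGL]
  nlinarith [pow_pos (by positivity : (0 : ℝ) < q) (t * t),
    pow_nonneg (by positivity : (0 : ℝ) ≤ (q : ℝ)⁻¹) t]

lemma pow_div_four_le_ballCount {m n t : ℕ} (htm : t ≤ m) (htn : t ≤ n) :
    (Fintype.card F : ℝ) ^ (t * (m + n - t)) / 4 ≤ ballCount F m n t := by
  have hexp : t * (m + n - t) = t * t + (t * (n - t) + (m - t) * t) := by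
    zify [htm, htn, (by omega : t ≤ m + n)]
    ring
  set q := Fintype.card F
  calc (q : ℝ) ^ (t * (m + n - t)) / 4
      = (q : ℝ) ^ (t * t) / 4 * (q : ℝ) ^ (t * (n - t) + (m - t) * t) := by
        rw [hexp, pow_add]; ring
    _ ≤ Nat.card (GL (Fin t) F) * (q : ℝ) ^ (t * (n - t) + (m - t) * t) := by
        gcongr; exact pow_div_four_le_card_GL t
    _ ≤ ballCount F m n t := by exact_mod_cast card_GL_mul_pow_le_ballCount htm htn

lemma half_le_mul_ballCount_div {m n t N : ℕ} {μ : ℝ} (htm : t ≤ m) (htn : t ≤ n) (hμ : 0 < μ)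
    (hN : (0 : ℝ) < N)
    (hexp : (m * n + 1 : ℝ) + logb (Fintype.card F) μ - logb (Fintype.card F) N ≤
      t * (m + n - t)) :
    μ / 2 ≤ N * ((ballCount F m n t : ℝ) / (Fintype.card F : ℝ) ^ (m * n)) := by
  set q := Fintype.card F
  have hq : (2 : ℝ) ≤ q := by exact_mod_cast Fintype.one_lt_card (α := F)
  have hq1 : (1 : ℝ) < q := by linarith
  have hpow : (q : ℝ) ^ (m * n + 1) * μ / N ≤ (q : ℝ) ^ (t * (m + n - t)) := by
    rw [← logb_le_logb hq1 (by positivity) (by positivity), logb_div (by positivity) hN.ne',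
      logb_pow_mul_self hq1 hμ, logb_pow, logb_self_eq_one hq1]
    push_cast [Nat.cast_sub (by omega : t ≤ m + n)]
    linarith
  calc μ / 2 ≤ q * μ / 4 := by nlinarith
    _ = N * ((q : ℝ) ^ (m * n + 1) * μ / N / 4) / (q : ℝ) ^ (m * n) := by
      field_simp; ring
    _ ≤ N * ((q : ℝ) ^ (t * (m + n - t)) / 4) / (q : ℝ) ^ (m * n) := by gcongr
    _ ≤ N * (ballCount F m n t : ℝ) / (q : ℝ) ^ (m * n) := by
      gcongr; exact pow_div_four_le_ballCount htm htn
    _ = _ := by ring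

lemma ballCount_div_le_one (m n t : ℕ) :
    (ballCount F m n t : ℝ) / (Fintype.card F : ℝ) ^ (m * n) ≤ 1 := by
  rw [div_le_one (by positivity)]
  exact_mod_cast ballCount_le m n t

end Counting

theorem stmt11 (q : ℕ) (F : Type*) [Field F] [Fintype F] (hq : Fintype.card F = q) :
    ∃ C₂ : ℝ, 0 < C₂ ∧
      ∀ (m n N : ℕ) (μ : ℝ) (i : ℕ),
        1 ≤ n → n ≤ m → 2 ≤ N → 0 < μ →
        (q : ℝ) ^ (m + n) * μ ≤ (N : ℝ) →
        ((m : ℝ) + n) / 2 -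
          Real.sqrt (((m : ℝ) - n) ^ 2 / 4 + Real.logb q N - ((m : ℝ) + n) - Real.logb q μ)
          ≤ (i : ℝ) →
        i ≤ n →
        (1 - (ballCount F m n (i - 1) : ℝ) / (q : ℝ) ^ (m * n)) ^ N -
          (1 - (ballCount F m n i : ℝ) / (q : ℝ) ^ (m * n)) ^ N ≤
        Real.exp (-(C₂ * μ)) := by
  subst hq
  refine ⟨1 / 2, by norm_num, fun m n N μ i _ hnm _ hμ hNμ hi hin ↦ ?_⟩
  rcases i with _ | t
  · -- `0 - 1 = 0` in `ℕ`, so both terms coincide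
    simpa using (exp_pos _).le
  rw [Nat.add_sub_cancel]
  push_cast at hi
  have hq1 : (1 : ℝ) < Fintype.card F := by exact_mod_cast Fintype.one_lt_card (α := F)
  have hN : (0 : ℝ) < N := lt_of_lt_of_le (by positivity) hNμ
  have hlog : (m + n : ℝ) + logb (Fintype.card F) μ ≤ logb (Fintype.card F) N := by
    have := logb_le_logb_of_le hq1 (by positivity) hNμ
    rwa [logb_pow_mul_self hq1 hμ, Nat.cast_add] at this
  have hexp := mul_sub_le_of_sub_sqrt_le (by exact_mod_cast hnm) (by exact_mod_cast hin)
    t.cast_nonneg hlog hi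
  calc _ ≤ exp (-(N * ((ballCount F m n t : ℝ) / (Fintype.card F : ℝ) ^ (m * n)))) :=
        one_sub_pow_sub_one_sub_pow_le (ballCount_div_le_one m n t)
          (ballCount_div_le_one m n (t + 1)) N
    _ ≤ exp (-(1 / 2 * μ)) :=
        exp_le_exp.2 (by
          linarith [half_le_mul_ballCount_div (F := F) (by omega) (by omega) hμ hN hexp])
end

section
/- (Covering density of MRD codes) Let q be a prime power, n ≤ m positive integers, t ≥ 0 an integer with 2t + 1 ≤ n, and let C be a set of m×n matrices over F_q with |C| = q^{m(n−2t)} and minimum rank distance 2t + 1 (an MRD code). Then the covering density D = |C| · B_t / q^{mn} satisfies q^{−((m−n+2)t + t²)} ≤ D ≤ q^{−((m−n−1)t + t²)}, where B_t is the number of m×n matrices over F_q of rank at most t. -/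
/-- `d` is the minimum rank distance of the code `C` (a set of `m × n` matrices over `F`). -/
def IsMinRankDist {F : Type*} [Field F] [Fintype F] {m n : ℕ}
    (C : Set (Matrix (Fin m) (Fin n) F)) (d : ℕ) : Prop :=
  (∀ c₁ ∈ C, ∀ c₂ ∈ C, c₁ ≠ c₂ → d ≤ (c₁ - c₂).rank) ∧
  ∃ c₁ ∈ C, ∃ c₂ ∈ C, c₁ ≠ c₂ ∧ (c₁ - c₂).rank = d

/-!
Write `q = |F|`. Since `|C| = q ^ (m (n - 2t))`, the density is `B_t · q ^ (-2mt)`, so it suffices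
to show `q ^ ((m + n - t - 1) t) ≤ B_t ≤ q ^ ((m + n - t + 1) t)`. Both bounds compare `B_t` with
`|GL_t(F)| ≥ q ^ (t² - t)`. A matrix of rank at most `t` factors as `X Y` with `Y` a `t × n` matrix
of full row rank, and the pairs `(X G⁻¹, G Y)`, `G ∈ GL_t(F)`, are distinct, so
`B_t · |GL_t(F)| ≤ q ^ ((m + n) t)`. Conversely the block matrices `[G; W] [1 | Z]` with `G`
invertible have rank at most `t` and are pairwise distinct, so
`|GL_t(F)| · q ^ ((m - t) t + t (n - t)) ≤ B_t`.
-/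

open Module Submodule Matrix

theorem Submodule.exists_le_finrank_eq {K V : Type*} [DivisionRing K] [AddCommGroup V]
    [Module K V] [FiniteDimensional K V] (W : Submodule K V) {k : ℕ}
    (hWk : finrank K W ≤ k) (hk : k ≤ finrank K V) :
    ∃ U : Submodule K V, W ≤ U ∧ finrank K U = k := by
  induction k with
  | zero => exact ⟨W, le_rfl, Nat.le_zero.mp hWk⟩
  | succ k ih =>
    rcases hWk.eq_or_lt with hWk | hWk
    · exact ⟨W, le_rfl, hWk⟩
    obtain ⟨U, hWU, hU⟩ := ih (Nat.le_of_lt_succ hWk) (Nat.le_of_succ_le hk)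
    obtain ⟨v, hv⟩ : ∃ v, v ∉ U := by
      by_contra! hU_top
      rw [show U = ⊤ from eq_top_iff.2 fun v _ ↦ hU_top v, finrank_top] at hU
      omega
    exact ⟨U ⊔ span K {v}, hWU.trans le_sup_left, by rw [finrank_sup_span_singleton hv, hU]⟩

namespace Matrix

theorem natCard_eq {F m n : Type*} [Fintype F] [Fintype m] [Fintype n] :
    Nat.card (Matrix m n F) = Fintype.card F ^ (Fintype.card m * Fintype.card n) := by
  rw [Matrix, Nat.card_fun, Nat.card_fun, ← pow_mul, mul_comm]
  simp only [Nat.card_eq_fintype_card]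

variable {F : Type*} [Field F] {m n : Type*}

theorem exists_eq_mul_of_rank_le [Fintype m] [Fintype n] {t : ℕ} (A : Matrix m n F)
    (hA : A.rank ≤ t) (ht : t ≤ Fintype.card n) :
    ∃ (X : Matrix m (Fin t) F) (Y : Matrix (Fin t) n F),
      LinearIndependent F Y.row ∧ A = X * Y := by
  rw [rank_eq_finrank_span_row] at hA
  obtain ⟨U, hAU, hU⟩ := (span F (Set.range A.row)).exists_le_finrank_eq hA
    (by rwa [finrank_fintype_fun_eq_card])
  let b := finBasisOfFinrankEq F U hU
  have hrow (i : m) : A i ∈ U := hAU (subset_span ⟨i, rfl⟩)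
  refine ⟨of fun i ↦ b.repr ⟨A i, hrow i⟩, of fun k ↦ b k,
    b.linearIndependent.map' U.subtype U.ker_subtype, funext fun i ↦ ?_⟩
  rw [mul_apply_eq_vecMul, vecMul_eq_sum]
  have := congrArg Subtype.val (b.sum_repr ⟨A i, hrow i⟩)
  rw [coe_sum] at this
  exact this.symm

theorem eq_of_mul_eq_mul_of_linearIndependent_row {k l : Type*} [Fintype k]
    {Y : Matrix k n F} (hY : LinearIndependent F Y.row) {G G' : Matrix l k F}
    (h : G * Y = G' * Y) : G = G' :=
  funext fun i ↦ vecMul_injective_iff.2 hY (congrFun h i)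

theorem card_rank_le_congr {m' n' : Type*} [Fintype n] [Fintype n'] (em : m ≃ m') (en : n ≃ n')
    (t : ℕ) :
    Nat.card {A : Matrix m n F // A.rank ≤ t} = Nat.card {A : Matrix m' n' F // A.rank ≤ t} :=
  Nat.card_congr ((reindex em en).subtypeEquiv fun A ↦ by rw [rank_reindex])

theorem card_rank_le_mul_card_GL_le [Finite F] [Fintype m] [Fintype n] {t : ℕ}
    (ht : t ≤ Fintype.card n) :
    Nat.card {A : Matrix m n F // A.rank ≤ t} * Nat.card (GL (Fin t) F) ≤
      Nat.card (Matrix m (Fin t) F × Matrix (Fin t) n F) := by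
  choose X Y hY hXY using fun A : {A : Matrix m n F // A.rank ≤ t} ↦
    A.1.exists_eq_mul_of_rank_le A.2 ht
  have hXGY (A) (G : GL (Fin t) F) :
      X A * (↑G⁻¹ : Matrix (Fin t) (Fin t) F) * ((G : Matrix (Fin t) (Fin t) F) * Y A) = A := by
    rw [Matrix.mul_assoc, ← Matrix.mul_assoc (↑G⁻¹ : Matrix (Fin t) (Fin t) F), Units.inv_mul,
      Matrix.one_mul, hXY]
  rw [← Nat.card_prod]
  refine Nat.card_le_card_of_injective (fun p ↦
    (X p.1 * (↑p.2⁻¹ : Matrix (Fin t) (Fin t) F), (p.2 : Matrix (Fin t) (Fin t) F) * Y p.1)) ?_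
  rintro ⟨A, G⟩ ⟨A', G'⟩ h
  simp only [Prod.mk.injEq] at h
  obtain rfl : A = A' := Subtype.ext <| by rw [← hXGY A G, ← hXGY A' G', h.1, h.2]
  exact Prod.ext rfl (Units.ext (eq_of_mul_eq_mul_of_linearIndependent_row (hY A) h.2))

theorem card_GL_prod_le_card_rank_le [Finite F] {k : Type*} [Fintype k] [DecidableEq k]
    [Fintype m] [Fintype n] :
    Nat.card (GL k F × Matrix m k F × Matrix k n F) ≤
      Nat.card {A : Matrix (k ⊕ m) (k ⊕ n) F // A.rank ≤ Fintype.card k} := by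
  refine Nat.card_le_card_of_injective
    (fun p ↦ ⟨fromRows (p.1 : Matrix k k F) p.2.1 * fromCols 1 p.2.2,
      (rank_mul_le_left _ _).trans (rank_le_card_width _)⟩) ?_
  rintro ⟨G, W, Z⟩ ⟨G', W', Z'⟩ h
  simp only [Subtype.mk.injEq, fromRows_mul_fromCols, Matrix.mul_one, fromBlocks_inj] at h
  obtain ⟨hG, hGZ, hW, -⟩ := h
  obtain rfl : G = G' := Units.ext hG
  have hZ := congrArg ((↑G⁻¹ : Matrix k k F) * ·) hGZ
  simp only [← Matrix.mul_assoc, Units.inv_mul, Matrix.one_mul] at hZ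
  rw [hW, hZ]

theorem card_pow_mul_self_le_card_pow_mul_card_GL [Fintype F] (t : ℕ) :
    Fintype.card F ^ (t * t) ≤ Fintype.card F ^ t * Nat.card (GL (Fin t) F) := by
  set q := Fintype.card F
  have hq : 2 ≤ q := Fintype.one_lt_card
  have hfactor (i : Fin t) : q ^ t ≤ q * (q ^ t - q ^ (i : ℕ)) := by
    have h1 : q ^ (i.val + 1) ≤ q ^ t := Nat.pow_le_pow_right (by omega) i.isLt
    have h2 : 2 * q ^ t ≤ q ^ (t + 1) := by rw [pow_succ']; exact Nat.mul_le_mul_right _ hq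
    rw [Nat.mul_sub, ← pow_succ', ← pow_succ']
    omega
  calc q ^ (t * t) = ∏ _i : Fin t, q ^ t := by rw [Fin.prod_const, ← pow_mul]
    _ ≤ ∏ i : Fin t, q * (q ^ t - q ^ (i : ℕ)) := Finset.prod_le_prod' fun i _ ↦ hfactor i
    _ = q ^ t * Nat.card (GL (Fin t) F) := by
      rw [Finset.prod_mul_distrib, Fin.prod_const, card_GL_field]

end Matrix

section ballCount

variable {F : Type*} [Field F] [Fintype F] {m n t : ℕ}

theorem pow_le_ballCount (htm : t ≤ m) (htn : t ≤ n) :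
    (Fintype.card F : ℝ) ^ (((m : ℤ) + n - t - 1) * t) ≤ ballCount F m n t := by
  obtain ⟨a, rfl⟩ := Nat.exists_eq_add_of_le htm
  obtain ⟨b, rfl⟩ := Nat.exists_eq_add_of_le htn
  set q := Fintype.card F
  have hcount : q ^ (t * t + (a * t + t * b)) ≤ q ^ t * ballCount F (t + a) (t + b) t :=
    calc _ = q ^ (t * t) * (q ^ (a * t) * q ^ (t * b)) := by rw [pow_add, pow_add]
      _ ≤ q ^ t * Nat.card (GL (Fin t) F) * (q ^ (a * t) * q ^ (t * b)) :=
          Nat.mul_le_mul_right _ (card_pow_mul_self_le_card_pow_mul_card_GL t)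
      _ = q ^ t *
          Nat.card (GL (Fin t) F × Matrix (Fin a) (Fin t) F × Matrix (Fin t) (Fin b) F) := by
          rw [Nat.card_prod, Nat.card_prod, natCard_eq, natCard_eq, mul_assoc]
          simp only [Fintype.card_fin, q]
      _ ≤ q ^ t * ballCount F (t + a) (t + b) t := by
          refine Nat.mul_le_mul_left _ (card_GL_prod_le_card_rank_le.trans_eq ?_)
          rw [Fintype.card_fin, ballCount, card_rank_le_congr finSumFinEquiv finSumFinEquiv]
  have hq0 : (0 : ℝ) < q := by exact_mod_cast Fintype.card_pos
  rw [show (((t + a : ℕ) : ℤ) + (t + b : ℕ) - t - 1) * t =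
      ((t * t + (a * t + t * b) : ℕ) : ℤ) - (t : ℕ) by push_cast; ring,
    zpow_sub₀ hq0.ne', zpow_natCast, zpow_natCast, div_le_iff₀' (by positivity)]
  exact_mod_cast hcount

theorem ballCount_le_pow (htn : t ≤ n) :
    (ballCount F m n t : ℝ) ≤ (Fintype.card F : ℝ) ^ (((m : ℤ) + n - t + 1) * t) := by
  set q := Fintype.card F
  have hcount : ballCount F m n t * q ^ (t * t) ≤ q ^ (t + (m * t + t * n)) :=
    calc _ ≤ ballCount F m n t * (q ^ t * Nat.card (GL (Fin t) F)) :=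
          Nat.mul_le_mul_left _ (card_pow_mul_self_le_card_pow_mul_card_GL t)
      _ = q ^ t * (ballCount F m n t * Nat.card (GL (Fin t) F)) := by ring
      _ ≤ q ^ t * Nat.card (Matrix (Fin m) (Fin t) F × Matrix (Fin t) (Fin n) F) :=
          Nat.mul_le_mul_left _ (card_rank_le_mul_card_GL_le (by rwa [Fintype.card_fin]))
      _ = q ^ (t + (m * t + t * n)) := by
          rw [Nat.card_prod, natCard_eq, natCard_eq, pow_add, pow_add]
          simp only [Fintype.card_fin, q]
  have hq0 : (0 : ℝ) < q := by exact_mod_cast Fintype.card_pos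
  rw [show ((m : ℤ) + n - t + 1) * t = ((t + (m * t + t * n) : ℕ) : ℤ) - (t * t : ℕ) by
      push_cast; ring,
    zpow_sub₀ hq0.ne', zpow_natCast, zpow_natCast, le_div_iff₀ (by positivity)]
  exact_mod_cast hcount

end ballCount

theorem stmt16_general (q : ℕ) (F : Type*) [Field F] [Fintype F] (hq : Fintype.card F = q)
    (m n t : ℕ) (hnm : n ≤ m) (ht : 2 * t + 1 ≤ n)
    (C : Set (Matrix (Fin m) (Fin n) F)) (hcard : Nat.card C = q ^ (m * (n - 2 * t))) :
    (q : ℝ) ^ (-(((m : ℤ) - n + 2) * t + (t : ℤ) ^ 2)) ≤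
      (Nat.card C * ballCount F m n t : ℝ) / (q : ℝ) ^ (m * n) ∧
    (Nat.card C * ballCount F m n t : ℝ) / (q : ℝ) ^ (m * n) ≤
      (q : ℝ) ^ (-(((m : ℤ) - n - 1) * t + (t : ℤ) ^ 2)) := by
  subst hq
  have hq0 : (0 : ℝ) < Fintype.card F := by exact_mod_cast Fintype.card_pos
  have hq1 : (1 : ℝ) ≤ Fintype.card F := by exact_mod_cast Fintype.card_pos
  have hdensity : (Nat.card C * ballCount F m n t : ℝ) / (Fintype.card F : ℝ) ^ (m * n) =
      ballCount F m n t * (Fintype.card F : ℝ) ^ (-(2 * m * t : ℤ)) := by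
    rw [hcard, Nat.cast_pow, ← zpow_natCast, ← zpow_natCast, mul_comm, mul_div_assoc,
      ← zpow_sub₀ hq0.ne']
    congr 2
    push_cast [Nat.cast_sub (by omega : 2 * t ≤ n)]
    ring
  rw [hdensity]
  constructor
  · calc _ ≤ (Fintype.card F : ℝ) ^ (((m : ℤ) + n - t - 1) * t + -(2 * m * t : ℤ)) :=
          zpow_le_zpow_right₀ hq1 (by nlinarith)
      _ ≤ _ := by
          rw [zpow_add₀ hq0.ne']
          gcongr
          exact pow_le_ballCount (by omega) (by omega)
  · calc _ ≤ (Fintype.card F : ℝ) ^ (((m : ℤ) + n - t + 1) * t + -(2 * m * t : ℤ)) := by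
          rw [zpow_add₀ hq0.ne']
          gcongr
          exact ballCount_le_pow (by omega)
      _ = _ := by ring_nf

/-- Covering density bounds for MRD codes. -/
theorem stmt16 (q : ℕ) (F : Type*) [Field F] [Fintype F] (hq : Fintype.card F = q)
    (m n t : ℕ) (hn : 1 ≤ n) (hnm : n ≤ m) (ht : 2 * t + 1 ≤ n)
    (C : Set (Matrix (Fin m) (Fin n) F)) (hcard : Nat.card C = q ^ (m * (n - 2 * t)))
    (hd : IsMinRankDist C (2 * t + 1)) :
    (q : ℝ) ^ (-(((m : ℤ) - n + 2) * t + (t : ℤ) ^ 2)) ≤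
      (Nat.card C * ballCount F m n t : ℝ) / (q : ℝ) ^ (m * n) ∧
    (Nat.card C * ballCount F m n t : ℝ) / (q : ℝ) ^ (m * n) ≤
      (q : ℝ) ^ (-(((m : ℤ) - n - 1) * t + (t : ℤ) ^ 2)) :=
  stmt16_general q F hq m n t hnm ht C hcard
end
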